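/- (Stability of the distance to the bad sets under perturbation.) Let r' ≥ r ≥ 2, n ≥ 2, m ∈ {1,…,n−1} and s ∈ {1,…,r−1} be integers, and let τ > 0. There exist constants ε* > 0, χ > 0 and ζ > 0, depending only on (r', r, s, m, n, τ), such that for every Q ∈ 𝒫*(r',n) with ‖Q_r − 𝒱(r,s,m,n)‖_∞ > τ, every ε ∈ [0,ε*] and every S ∈ 𝒫*(r',n) with ‖S − Q‖_∞ ≤ ε, one has: (i) ‖S_r − 𝒱(r,s,m,n)‖_∞ > χ; and (ii) for every real n×m matrix A with orthonormal columns, all orthogonal to ∇S(0), the restricted polynomial x ↦ S_r(Ax) ∈ 𝒫(r,m) satisfies ‖S_r(A·) − Σ(r,s,m)‖_∞ > ζ. -/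

import Mathlib

/-!
Part (i) is the triangle inequality: truncation at degree `r` is `1`-Lipschitz for the
coefficient sup-norm, so `χ = ε* = τ / 2` works.

For part (ii), put `D = S_r(A·) - W` with `W ∈ Σ(r,s,m)` and let `L = D(Aᵀ·)` be its extension
that is constant along the orthogonal complement of the columns of `A`. Since `AᵀA = 1`,
`V = S_r - L` restricts to `W`; since the columns of `A` are orthogonal to `∇S(0)` and `W` has no
linear part, `∇D(0) = 0`, hence `∇V(0) = ∇S(0) ≠ 0`. So `V ∈ 𝒱(r,s,m,n)` and part (i) gives
`‖L‖_∞ = ‖S_r - V‖_∞ > τ / 2`. Finally `‖L‖_∞ ≤ K ‖D‖_∞` with `K` depending only on `r`, `m`,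
`n`, because the entries of `A` lie in `[-1, 1]`: pass through the `ℓ¹`-norm of the
coefficients, which is submultiplicative.
-/

open MvPolynomial Metric Set Matrix
open scoped RealInnerProductSpace

noncomputable section

/-- `𝒫(r,n)`: polynomials in `n` real variables with zero constant term and
total degree at most `r`. -/
def PolySpace (r n : ℕ) : Set (MvPolynomial (Fin n) ℝ) :=
  {P | P.coeff 0 = 0 ∧ P.totalDegree ≤ r}

/-- Sup-norm of the coefficients of a polynomial. -/
def polyNorm {n : ℕ} (P : MvPolynomial (Fin n) ℝ) : ℝ :=
  ⨆ μ : Fin n →₀ ℕ, |P.coeff μ|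

/-- The vector of partial derivatives (the gradient) of a polynomial at a point. -/
def polyGrad {n : ℕ} (P : MvPolynomial (Fin n) ℝ) (x : Fin n → ℝ) : Fin n → ℝ :=
  fun i => eval x (pderiv i P)

/-- `𝒫*(r,n)`: elements of `𝒫(r,n)` with nonzero gradient at the origin. -/
def PolySpaceStar (r n : ℕ) : Set (MvPolynomial (Fin n) ℝ) :=
  {P | P ∈ PolySpace r n ∧ polyGrad P 0 ≠ 0}

/-- The `s`-truncation parametrized by the `i`-th coordinate with coefficients `a`:
the curve whose `i`-th component is `t` and whose `j`-th component (`j ≠ i`) is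
`∑_{k=1}^{s} a_{jk} t^k`. -/
def truncCurve {m : ℕ} (s : ℕ) (i : Fin m) (a : Fin m → Fin s → ℝ) : ℝ → Fin m → ℝ :=
  fun t j => if j = i then t else ∑ k : Fin s, a j k * t ^ ((k : ℕ) + 1)

/-- `P` satisfies the `s`-vanishing condition on the curve `γ`. -/
def SVanishing {m : ℕ} (s : ℕ) (P : MvPolynomial (Fin m) ℝ) (γ : ℝ → Fin m → ℝ) : Prop :=
  ∀ ℓ : Fin m, ∀ α ≤ s, iteratedDeriv α (fun t => eval (γ t) (pderiv ℓ P)) 0 = 0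

/-- `σ^i(r,s,m)`: polynomials of `𝒫(r,m)` that satisfy the `s`-vanishing condition on
some `s`-truncation parametrized by the `i`-th coordinate. -/
def sigmaI (r s m : ℕ) (i : Fin m) : Set (MvPolynomial (Fin m) ℝ) :=
  {P | P ∈ PolySpace r m ∧ ∃ a : Fin m → Fin s → ℝ, SVanishing s P (truncCurve s i a)}

/-- `σ(r,s,m)`. -/
def sigmaSet (r s m : ℕ) : Set (MvPolynomial (Fin m) ℝ) :=
  ⋃ i : Fin m, sigmaI r s m i

/-- Closure with respect to the coefficient sup-norm. -/
def closureNorm {n : ℕ} (A : Set (MvPolynomial (Fin n) ℝ)) : Set (MvPolynomial (Fin n) ℝ) :=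
  {P | ∀ ε > (0:ℝ), ∃ Q ∈ A, polyNorm (P - Q) < ε}

/-- `Σ(r,s,m)`: the closure of the set of `s`-vanishing polynomials. -/
def SigmaCl (r s m : ℕ) : Set (MvPolynomial (Fin m) ℝ) :=
  closureNorm (sigmaSet r s m)

/-- The restriction `x ↦ Q(Ax)` of `Q` to the span of the columns of `A`. -/
def restrictPoly {n m : ℕ} (A : Matrix (Fin n) (Fin m) ℝ) (Q : MvPolynomial (Fin n) ℝ) :
    MvPolynomial (Fin m) ℝ :=
  aeval (fun i : Fin n => ∑ j : Fin m, C (A i j) * X j) Q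

/-- The bad set `𝒱(r,s,m,n)`: polynomials of `𝒫*(r,n)` whose restriction to the span of
the (orthonormal) columns of some matrix `A` lies in `Σ(r,s,m)`. -/
def badV (r s m n : ℕ) : Set (MvPolynomial (Fin n) ℝ) :=
  {Q | Q ∈ PolySpaceStar r n ∧
    ∃ A : Matrix (Fin n) (Fin m) ℝ, Aᵀ * A = 1 ∧ restrictPoly A Q ∈ SigmaCl r s m}

/-- The truncation of `Q` at total degree `r`: all monomials of total degree greater
than `r` are discarded. -/
def truncatePoly {n : ℕ} (r : ℕ) (Q : MvPolynomial (Fin n) ℝ) : MvPolynomial (Fin n) ℝ :=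
  ∑ μ ∈ Q.support.filter (fun μ => (∑ i, μ i) ≤ r), monomial μ (Q.coeff μ)


section CoeffL1

variable {σ τ : Type*}

lemma totalDegree_le_of_coeff_eq_zero {P : MvPolynomial σ ℝ} {r : ℕ}
    (h : ∀ μ : σ →₀ ℕ, r < μ.degree → P.coeff μ = 0) : P.totalDegree ≤ r :=
  Finset.sup_le fun μ hμ => not_lt.mp fun hlt => mem_support_iff.mp hμ (h μ hlt)

def coeffL1 (P : MvPolynomial σ ℝ) : ℝ := ∑ μ ∈ P.support, |P.coeff μ|

lemma coeffL1_nonneg (P : MvPolynomial σ ℝ) : 0 ≤ coeffL1 P :=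
  Finset.sum_nonneg fun _ _ => abs_nonneg _

lemma abs_coeff_le_coeffL1 (P : MvPolynomial σ ℝ) (μ : σ →₀ ℕ) : |P.coeff μ| ≤ coeffL1 P := by
  by_cases hμ : μ ∈ P.support
  · exact Finset.single_le_sum (f := fun ν => |P.coeff ν|) (fun _ _ => abs_nonneg _) hμ
  · simpa [notMem_support_iff.mp hμ] using coeffL1_nonneg P

@[simp]
lemma coeffL1_zero : coeffL1 (0 : MvPolynomial σ ℝ) = 0 := by simp [coeffL1]

@[simp]
lemma coeffL1_monomial (μ : σ →₀ ℕ) (a : ℝ) : coeffL1 (monomial μ a) = |a| := by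
  classical
  by_cases ha : a = 0
  · simp [ha]
  · simp [coeffL1, support_monomial, ha]

lemma coeffL1_add_le (P Q : MvPolynomial σ ℝ) : coeffL1 (P + Q) ≤ coeffL1 P + coeffL1 Q := by
  classical
  calc coeffL1 (P + Q) ≤ ∑ μ ∈ (P + Q).support, (|P.coeff μ| + |Q.coeff μ|) :=
        Finset.sum_le_sum fun μ _ => by simpa using abs_add_le (P.coeff μ) (Q.coeff μ)
    _ ≤ ∑ μ ∈ P.support ∪ Q.support, (|P.coeff μ| + |Q.coeff μ|) :=
        Finset.sum_le_sum_of_subset_of_nonneg support_add fun _ _ _ => by positivity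
    _ = coeffL1 P + coeffL1 Q := by
        have hsub : ∀ R : MvPolynomial σ ℝ, R.support ⊆ P.support ∪ Q.support →
            ∑ μ ∈ P.support ∪ Q.support, |R.coeff μ| = coeffL1 R := fun R hR =>
          (Finset.sum_subset hR fun μ _ hμ => by simp [notMem_support_iff.mp hμ]).symm
        rw [Finset.sum_add_distrib, hsub P Finset.subset_union_left,
          hsub Q Finset.subset_union_right]

lemma coeffL1_sum_le {ι : Type*} (s : Finset ι) (f : ι → MvPolynomial σ ℝ) :
    coeffL1 (∑ i ∈ s, f i) ≤ ∑ i ∈ s, coeffL1 (f i) :=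
  Finset.le_sum_of_subadditive coeffL1 coeffL1_zero.le coeffL1_add_le s f

lemma coeffL1_mul_le (P Q : MvPolynomial σ ℝ) : coeffL1 (P * Q) ≤ coeffL1 P * coeffL1 Q := by
  have hPQ : P * Q = ∑ μ ∈ P.support, ∑ ν ∈ Q.support,
      monomial (μ + ν) (P.coeff μ * Q.coeff ν) := by
    conv_lhs => rw [P.as_sum, Q.as_sum]
    simp only [Finset.sum_mul_sum, monomial_mul]
  calc coeffL1 (P * Q) ≤ ∑ μ ∈ P.support, ∑ ν ∈ Q.support, |P.coeff μ * Q.coeff ν| := by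
        rw [hPQ]
        refine (coeffL1_sum_le _ _).trans (Finset.sum_le_sum fun μ _ => ?_)
        exact (coeffL1_sum_le _ _).trans (by simp [abs_mul])
    _ = coeffL1 P * coeffL1 Q := by simp only [coeffL1, Finset.sum_mul_sum, abs_mul]

lemma coeffL1_prod_le {ι : Type*} (s : Finset ι) (f : ι → MvPolynomial σ ℝ) :
    coeffL1 (∏ i ∈ s, f i) ≤ ∏ i ∈ s, coeffL1 (f i) := by
  classical
  induction s using Finset.induction_on with
  | empty => simpa using (coeffL1_monomial (0 : σ →₀ ℕ) 1).le
  | insert a s ha ih =>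
    rw [Finset.prod_insert ha, Finset.prod_insert ha]
    exact (coeffL1_mul_le _ _).trans (mul_le_mul_of_nonneg_left ih (coeffL1_nonneg _))

lemma coeffL1_pow_le (P : MvPolynomial σ ℝ) (k : ℕ) : coeffL1 (P ^ k) ≤ coeffL1 P ^ k := by
  simpa using coeffL1_prod_le (Finset.range k) fun _ => P

lemma coeffL1_aeval_le {g : σ → MvPolynomial τ ℝ} {c : ℝ} (hc : 1 ≤ c)
    (hg : ∀ i, coeffL1 (g i) ≤ c) {r : ℕ} {P : MvPolynomial σ ℝ} (hP : P.totalDegree ≤ r) :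
    coeffL1 (aeval g P) ≤ c ^ r * coeffL1 P := by
  have hmono : ∀ μ ∈ P.support, coeffL1 (aeval g (monomial μ (P.coeff μ))) ≤
      c ^ r * |P.coeff μ| := by
    intro μ hμ
    rw [aeval_monomial, algebraMap_eq, ← monomial_zero', mul_comm (c ^ r)]
    refine (coeffL1_mul_le _ _).trans ?_
    rw [coeffL1_monomial]
    gcongr
    calc coeffL1 (μ.prod fun i k => g i ^ k) ≤ ∏ i ∈ μ.support, coeffL1 (g i) ^ μ i :=
          (coeffL1_prod_le _ _).trans <| Finset.prod_le_prod (fun _ _ => coeffL1_nonneg _)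
            fun i _ => coeffL1_pow_le _ _
      _ ≤ ∏ i ∈ μ.support, c ^ μ i :=
          Finset.prod_le_prod (fun _ _ => pow_nonneg (coeffL1_nonneg _) _)
            fun i _ => pow_le_pow_left₀ (coeffL1_nonneg _) (hg i) _
      _ ≤ c ^ r := by
          rw [Finset.prod_pow_eq_pow_sum]
          exact pow_le_pow_right₀ hc ((le_totalDegree hμ).trans hP)
  conv_lhs => rw [P.as_sum, map_sum]
  refine (coeffL1_sum_le _ _).trans ((Finset.sum_le_sum hmono).trans_eq ?_)
  rw [← Finset.mul_sum, coeffL1]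

end CoeffL1

section PolyNorm

variable {n : ℕ}

lemma abs_coeff_le_polyNorm (P : MvPolynomial (Fin n) ℝ) (μ : Fin n →₀ ℕ) :
    |P.coeff μ| ≤ polyNorm P :=
  le_ciSup ⟨coeffL1 P, by rintro _ ⟨ν, rfl⟩; exact abs_coeff_le_coeffL1 P ν⟩ μ

lemma polyNorm_nonneg (P : MvPolynomial (Fin n) ℝ) : 0 ≤ polyNorm P :=
  (abs_nonneg _).trans (abs_coeff_le_polyNorm P 0)

lemma polyNorm_le {P : MvPolynomial (Fin n) ℝ} {c : ℝ} (h : ∀ μ, |P.coeff μ| ≤ c) :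
    polyNorm P ≤ c :=
  ciSup_le h

lemma polyNorm_le_coeffL1 (P : MvPolynomial (Fin n) ℝ) : polyNorm P ≤ coeffL1 P :=
  polyNorm_le (abs_coeff_le_coeffL1 P)

lemma polyNorm_sub_comm (P Q : MvPolynomial (Fin n) ℝ) : polyNorm (P - Q) = polyNorm (Q - P) := by
  simp only [polyNorm, coeff_sub, abs_sub_comm]

lemma polyNorm_sub_le_polyNorm_sub_add_polyNorm_sub (P Q R : MvPolynomial (Fin n) ℝ) :
    polyNorm (P - R) ≤ polyNorm (P - Q) + polyNorm (Q - R) :=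
  polyNorm_le fun μ => by
    simpa using (abs_sub_le (P.coeff μ) (Q.coeff μ) (R.coeff μ)).trans
      (add_le_add (by simpa using abs_coeff_le_polyNorm (P - Q) μ)
        (by simpa using abs_coeff_le_polyNorm (Q - R) μ))

lemma coeffL1_le_ncard_mul_polyNorm {r : ℕ} {P : MvPolynomial (Fin n) ℝ}
    (hP : P.totalDegree ≤ r) :
    coeffL1 P ≤ {μ : Fin n →₀ ℕ | μ.degree ≤ r}.ncard * polyNorm P := by
  have hsupp : (P.support : Set (Fin n →₀ ℕ)) ⊆ {μ | μ.degree ≤ r} := fun μ hμ =>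
    (le_totalDegree hμ).trans hP
  calc coeffL1 P ≤ ∑ _μ ∈ P.support, polyNorm P :=
        Finset.sum_le_sum fun μ _ => abs_coeff_le_polyNorm P μ
    _ = P.support.card * polyNorm P := by rw [Finset.sum_const, nsmul_eq_mul]
    _ ≤ {μ : Fin n →₀ ℕ | μ.degree ≤ r}.ncard * polyNorm P := by
        gcongr
        · exact polyNorm_nonneg P
        · rw [← Set.ncard_coe_finset]
          exact Set.ncard_le_ncard hsupp (Finsupp.finite_of_degree_le r)

end PolyNorm

section PolySpace

variable {n : ℕ}

lemma polyGrad_zero_apply (P : MvPolynomial (Fin n) ℝ) (i : Fin n) :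
    polyGrad P 0 i = P.coeff (Finsupp.single i 1) := by
  simp [polyGrad, eval_zero, constantCoeff_eq, coeff_pderiv]

lemma polyGrad_sub (P Q : MvPolynomial (Fin n) ℝ) (x : Fin n → ℝ) :
    polyGrad (P - Q) x = polyGrad P x - polyGrad Q x :=
  funext fun i => by simp [polyGrad]

lemma sub_mem_polySpace {r : ℕ} {P Q : MvPolynomial (Fin n) ℝ} (hP : P ∈ PolySpace r n)
    (hQ : Q ∈ PolySpace r n) : P - Q ∈ PolySpace r n :=
  ⟨by simp [hP.1, hQ.1], (totalDegree_sub _ _).trans (max_le hP.2 hQ.2)⟩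

end PolySpace

section Truncation

variable {n : ℕ}

lemma coeff_truncatePoly (r : ℕ) (P : MvPolynomial (Fin n) ℝ) (μ : Fin n →₀ ℕ) :
    (truncatePoly r P).coeff μ = if μ.degree ≤ r then P.coeff μ else 0 := by
  simp only [truncatePoly, coeff_sum, coeff_monomial, Finset.sum_ite_eq', Finset.mem_filter,
    mem_support_iff, Finsupp.degree_eq_sum]
  split_ifs <;> tauto

lemma totalDegree_truncatePoly_le (r : ℕ) (P : MvPolynomial (Fin n) ℝ) :
    (truncatePoly r P).totalDegree ≤ r :=
  totalDegree_le_of_coeff_eq_zero fun μ hμ => by rw [coeff_truncatePoly, if_neg hμ.not_ge]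

lemma polyNorm_truncatePoly_sub_le (r : ℕ) (P Q : MvPolynomial (Fin n) ℝ) :
    polyNorm (truncatePoly r P - truncatePoly r Q) ≤ polyNorm (P - Q) :=
  polyNorm_le fun μ => by
    rw [coeff_sub, coeff_truncatePoly, coeff_truncatePoly]
    split_ifs
    · simpa using abs_coeff_le_polyNorm (P - Q) μ
    · simpa using polyNorm_nonneg (P - Q)

lemma lt_polyNorm_truncatePoly_sub {r : ℕ} {Q S V : MvPolynomial (Fin n) ℝ} {τ δ : ℝ}
    (hQ : τ < polyNorm (truncatePoly r Q - V)) (hSQ : polyNorm (S - Q) ≤ δ) :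
    τ - δ < polyNorm (truncatePoly r S - V) := by
  have htri := polyNorm_sub_le_polyNorm_sub_add_polyNorm_sub (truncatePoly r Q) (truncatePoly r S) V
  have htrunc := polyNorm_truncatePoly_sub_le r Q S
  rw [polyNorm_sub_comm Q S] at htrunc
  linarith

lemma polyGrad_truncatePoly_zero {r : ℕ} (hr : 1 ≤ r) (P : MvPolynomial (Fin n) ℝ) :
    polyGrad (truncatePoly r P) 0 = polyGrad P 0 :=
  funext fun i => by simp [polyGrad_zero_apply, coeff_truncatePoly, hr]

lemma truncatePoly_mem_polySpaceStar {r r' : ℕ} (hr : 1 ≤ r) {P : MvPolynomial (Fin n) ℝ}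
    (hP : P ∈ PolySpaceStar r' n) : truncatePoly r P ∈ PolySpaceStar r n :=
  ⟨⟨by simpa [coeff_truncatePoly] using hP.1.1, totalDegree_truncatePoly_le r P⟩,
    polyGrad_truncatePoly_zero hr P ▸ hP.2⟩

end Truncation

section SigmaCl

variable {r s m : ℕ}

lemma coeff_eq_zero_of_mem_closureNorm {n : ℕ} {A : Set (MvPolynomial (Fin n) ℝ)}
    {μ : Fin n →₀ ℕ} (h : ∀ P ∈ A, P.coeff μ = 0) {W : MvPolynomial (Fin n) ℝ}
    (hW : W ∈ closureNorm A) : W.coeff μ = 0 := by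
  by_contra h0
  obtain ⟨P, hP, hlt⟩ := hW |W.coeff μ| (abs_pos.2 h0)
  have hle := abs_coeff_le_polyNorm (W - P) μ
  rw [coeff_sub, h P hP, sub_zero] at hle
  exact hle.not_gt hlt

lemma polyGrad_zero_eq_zero_of_mem_sigmaSet {P : MvPolynomial (Fin m) ℝ}
    (hP : P ∈ sigmaSet r s m) : polyGrad P 0 = 0 := by
  obtain ⟨_, ⟨i, rfl⟩, -, a, hvan⟩ := hP
  have hγ : truncCurve s i a 0 = 0 := funext fun j => by simp [truncCurve]
  funext ℓ
  simpa [hγ, polyGrad] using hvan ℓ 0 (Nat.zero_le s)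

lemma mem_polySpace_of_mem_SigmaCl {W : MvPolynomial (Fin m) ℝ} (hW : W ∈ SigmaCl r s m) :
    W ∈ PolySpace r m := by
  have hσ : ∀ P ∈ sigmaSet r s m, P ∈ PolySpace r m := by
    rintro P ⟨_, ⟨i, rfl⟩, hP, -⟩
    exact hP
  refine ⟨coeff_eq_zero_of_mem_closureNorm (fun P hP => (hσ P hP).1) hW,
    totalDegree_le_of_coeff_eq_zero fun μ hμ => coeff_eq_zero_of_mem_closureNorm
      (fun P hP => coeff_eq_zero_of_totalDegree_lt ?_) hW⟩
  exact (hσ P hP).2.trans_lt hμ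

lemma polyGrad_zero_eq_zero_of_mem_SigmaCl {W : MvPolynomial (Fin m) ℝ}
    (hW : W ∈ SigmaCl r s m) : polyGrad W 0 = 0 :=
  funext fun ℓ => by
    rw [polyGrad_zero_apply]
    refine coeff_eq_zero_of_mem_closureNorm (fun P hP => ?_) hW
    rw [← polyGrad_zero_apply, polyGrad_zero_eq_zero_of_mem_sigmaSet hP, Pi.zero_apply]

end SigmaCl

section Restriction

variable {p q k : ℕ}

lemma restrictPoly_restrictPoly (A : Matrix (Fin q) (Fin k) ℝ) (B : Matrix (Fin p) (Fin q) ℝ)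
    (P : MvPolynomial (Fin p) ℝ) : restrictPoly A (restrictPoly B P) = restrictPoly (B * A) P := by
  unfold restrictPoly
  rw [← AlgHom.comp_apply, comp_aeval]
  congr 2
  funext i
  simp only [aeval_X, map_sum, map_mul, aeval_C, algebraMap_eq, Matrix.mul_apply,
    Finset.mul_sum, Finset.sum_mul, ← mul_assoc]
  exact Finset.sum_comm

lemma restrictPoly_one (P : MvPolynomial (Fin p) ℝ) : restrictPoly 1 P = P := by
  have hX : (fun i => ∑ j, C ((1 : Matrix (Fin p) (Fin p) ℝ) i j) * X j) = X := funext fun i => by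
    simp [Matrix.one_apply]
  simp only [restrictPoly, hX, aeval_X_left_apply]

lemma totalDegree_restrictPoly_le (B : Matrix (Fin p) (Fin q) ℝ) (P : MvPolynomial (Fin p) ℝ) :
    (restrictPoly B P).totalDegree ≤ P.totalDegree := by
  have hlin : ∀ i, (∑ j, C (B i j) * X j : MvPolynomial (Fin q) ℝ).IsHomogeneous 1 := fun i =>
    IsHomogeneous.sum _ _ _ fun j _ => (isHomogeneous_X ℝ j).C_mul _
  conv_lhs => rw [← sum_homogeneousComponent P]
  rw [restrictPoly, map_sum]
  refine totalDegree_finsetSum_le fun d hd => ?_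
  refine (((homogeneousComponent_isHomogeneous d P).aeval _ hlin).totalDegree_le).trans ?_
  simpa [Nat.lt_succ_iff] using hd

lemma restrictPoly_mem_polySpace (B : Matrix (Fin p) (Fin q) ℝ) {r : ℕ}
    {P : MvPolynomial (Fin p) ℝ} (hP : P ∈ PolySpace r p) : restrictPoly B P ∈ PolySpace r q := by
  refine ⟨?_, (totalDegree_restrictPoly_le B P).trans hP.2⟩
  have hcc : ∀ Q : MvPolynomial (Fin p) ℝ, constantCoeff (restrictPoly B Q) = constantCoeff Q := by
    intro Q
    unfold restrictPoly
    induction Q using MvPolynomial.induction_on with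
    | C a => simp
    | add Q Q' hQ hQ' => simp only [map_add, hQ, hQ']
    | mul_X Q i hQ => simp [-aeval_eq_bind₁, hQ]
  simpa [constantCoeff_eq, hP.1] using hcc P

lemma polyGrad_restrictPoly_zero (B : Matrix (Fin p) (Fin q) ℝ) (P : MvPolynomial (Fin p) ℝ)
    (j : Fin q) : polyGrad (restrictPoly B P) 0 j = ∑ i, B i j * polyGrad P 0 i := by
  simp only [polyGrad, eval_zero]
  unfold restrictPoly
  induction P using MvPolynomial.induction_on with
  | C a => simp
  | add P Q hP hQ => simp only [map_add, hP, hQ, mul_add, Finset.sum_add_distrib]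
  | mul_X P i hP =>
    simp [-aeval_eq_bind₁, Derivation.leibniz, pderiv_X, Pi.single_apply,
      apply_ite constantCoeff, mul_comm]

lemma restrictPoly_sub (B : Matrix (Fin p) (Fin q) ℝ) (P Q : MvPolynomial (Fin p) ℝ) :
    restrictPoly B (P - Q) = restrictPoly B P - restrictPoly B Q :=
  map_sub _ P Q

lemma polyNorm_restrictPoly_le {B : Matrix (Fin p) (Fin q) ℝ} (hB : ∀ i j, |B i j| ≤ 1)
    (hq : 1 ≤ q) {r : ℕ} {P : MvPolynomial (Fin p) ℝ} (hP : P.totalDegree ≤ r) :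
    polyNorm (restrictPoly B P) ≤ {μ : Fin p →₀ ℕ | μ.degree ≤ r}.ncard * q ^ r * polyNorm P := by
  have hrow : ∀ i, coeffL1 (∑ j, C (B i j) * X j : MvPolynomial (Fin q) ℝ) ≤ q := fun i =>
    calc _ ≤ ∑ j, coeffL1 (C (B i j) * X j : MvPolynomial (Fin q) ℝ) := coeffL1_sum_le _ _
      _ ≤ ∑ _j : Fin q, (1 : ℝ) :=
          Finset.sum_le_sum fun j _ => by simpa [C_mul_X_eq_monomial] using hB i j
      _ = q := by simp
  calc polyNorm (restrictPoly B P) ≤ coeffL1 (restrictPoly B P) := polyNorm_le_coeffL1 _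
    _ ≤ q ^ r * coeffL1 P := coeffL1_aeval_le (by exact_mod_cast hq) hrow hP
    _ ≤ q ^ r * ({μ : Fin p →₀ ℕ | μ.degree ≤ r}.ncard * polyNorm P) := by
        gcongr
        exact coeffL1_le_ncard_mul_polyNorm hP
    _ = _ := by ring

lemma abs_le_one_of_transpose_mul_self_eq_one {A : Matrix (Fin p) (Fin q) ℝ} (hA : Aᵀ * A = 1)
    (i : Fin p) (j : Fin q) : |A i j| ≤ 1 := by
  have hcol : ∑ i', A i' j * A i' j = 1 := by
    simpa [Matrix.mul_apply] using congrFun (congrFun hA j) j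
  rw [abs_le_one_iff_mul_self_le_one, ← hcol]
  exact Finset.single_le_sum (f := fun i' => A i' j * A i' j) (fun _ _ => mul_self_nonneg _)
    (Finset.mem_univ i)

end Restriction

lemma sub_restrictPoly_transpose_mem_badV {r s m n : ℕ} {P : MvPolynomial (Fin n) ℝ}
    (hP : P ∈ PolySpaceStar r n) {A : Matrix (Fin n) (Fin m) ℝ} (hA : Aᵀ * A = 1)
    (horth : ∀ j, ∑ i, A i j * polyGrad P 0 i = 0) {W : MvPolynomial (Fin m) ℝ}
    (hW : W ∈ SigmaCl r s m) :
    P - restrictPoly Aᵀ (restrictPoly A P - W) ∈ badV r s m n := by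
  set D := restrictPoly A P - W
  have hD : D ∈ PolySpace r m :=
    sub_mem_polySpace (restrictPoly_mem_polySpace A hP.1) (mem_polySpace_of_mem_SigmaCl hW)
  have hDgrad : polyGrad D 0 = 0 := by
    rw [polyGrad_sub, polyGrad_zero_eq_zero_of_mem_SigmaCl hW, sub_zero]
    funext j
    rw [polyGrad_restrictPoly_zero]
    exact horth j
  have hgrad : polyGrad (P - restrictPoly Aᵀ D) 0 = polyGrad P 0 := by
    rw [polyGrad_sub, sub_eq_self]
    funext i
    simp [polyGrad_restrictPoly_zero, hDgrad]
  refine ⟨⟨sub_mem_polySpace hP.1 (restrictPoly_mem_polySpace Aᵀ hD), hgrad ▸ hP.2⟩, A, hA, ?_⟩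
  rwa [restrictPoly_sub, restrictPoly_restrictPoly, hA, restrictPoly_one, sub_sub_cancel]

theorem statement2_general (r' r n m s : ℕ) (hr : 2 ≤ r) (hn : 2 ≤ n) (τ : ℝ) (hτ : 0 < τ) :
    ∃ εstar > (0:ℝ), ∃ χ > (0:ℝ), ∃ ζ > (0:ℝ),
      ∀ Q ∈ PolySpaceStar r' n,
        (∀ V ∈ badV r s m n, τ < polyNorm (truncatePoly r Q - V)) →
        ∀ ε ∈ Set.Icc (0:ℝ) εstar, ∀ S ∈ PolySpaceStar r' n, polyNorm (S - Q) ≤ ε →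
          (∀ V ∈ badV r s m n, χ < polyNorm (truncatePoly r S - V)) ∧
          (∀ A : Matrix (Fin n) (Fin m) ℝ, Aᵀ * A = 1 →
            (∀ j : Fin m, (∑ i : Fin n, A i j * polyGrad S 0 i) = 0) →
            ∀ W ∈ SigmaCl r s m, ζ < polyNorm (restrictPoly A (truncatePoly r S) - W)) := by
  set K : ℝ := {μ : Fin m →₀ ℕ | μ.degree ≤ r}.ncard * n ^ r
  have hK : 0 < K := by
    have : 0 < {μ : Fin m →₀ ℕ | μ.degree ≤ r}.ncard :=
      (Set.ncard_pos (Finsupp.finite_of_degree_le r)).2 ⟨0, by simp⟩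
    positivity
  refine ⟨τ / 2, by positivity, τ / 2, by positivity, τ / (2 * K), by positivity, ?_⟩
  intro Q _ hfar ε hε S hS hSQ
  have hfarS : ∀ V ∈ badV r s m n, τ / 2 < polyNorm (truncatePoly r S - V) := fun V hV => by
    linarith [lt_polyNorm_truncatePoly_sub (hfar V hV) (hSQ.trans hε.2)]
  refine ⟨hfarS, fun A hA horth W hW => ?_⟩
  have hr1 : 1 ≤ r := by omega
  have hTS := truncatePoly_mem_polySpaceStar hr1 hS
  set D := restrictPoly A (truncatePoly r S) - W
  have hbad := sub_restrictPoly_transpose_mem_badV hTS hA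
    (by simpa [polyGrad_truncatePoly_zero hr1] using horth) hW
  have hlift : τ / 2 < polyNorm (restrictPoly Aᵀ D) := by
    simpa using hfarS _ hbad
  have hbound : polyNorm (restrictPoly Aᵀ D) ≤ K * polyNorm D :=
    polyNorm_restrictPoly_le (fun j i => abs_le_one_of_transpose_mul_self_eq_one hA i j)
      (by omega) (sub_mem_polySpace (restrictPoly_mem_polySpace A hTS.1)
        (mem_polySpace_of_mem_SigmaCl hW)).2
  rw [div_lt_iff₀ (by positivity)]
  linarith [hlift.trans_le hbound]

/-- Stability of the distance to the bad sets under perturbation. -/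
theorem statement2 (r' r n m s : ℕ) (hrr : r ≤ r') (hr : 2 ≤ r) (hn : 2 ≤ n)
    (hm : 1 ≤ m ∧ m ≤ n - 1) (hs : 1 ≤ s ∧ s ≤ r - 1) (τ : ℝ) (hτ : 0 < τ) :
    ∃ εstar > (0:ℝ), ∃ χ > (0:ℝ), ∃ ζ > (0:ℝ),
      ∀ Q ∈ PolySpaceStar r' n,
        (∀ V ∈ badV r s m n, τ < polyNorm (truncatePoly r Q - V)) →
        ∀ ε ∈ Set.Icc (0:ℝ) εstar, ∀ S ∈ PolySpaceStar r' n, polyNorm (S - Q) ≤ ε →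
          (∀ V ∈ badV r s m n, χ < polyNorm (truncatePoly r S - V)) ∧
          (∀ A : Matrix (Fin n) (Fin m) ℝ, Aᵀ * A = 1 →
            (∀ j : Fin m, (∑ i : Fin n, A i j * polyGrad S 0 i) = 0) →
            ∀ W ∈ SigmaCl r s m, ζ < polyNorm (restrictPoly A (truncatePoly r S) - W)) :=
  statement2_general r' r n m s hr hn τ hτ

end
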